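/- arXiv:1805.09017 — 4 statements merged into one kernel-verified Lean document; each statement's English description precedes it below -/
import Mathlib

section
/- The number of fillings of an n×2 grid with 1,...,2n that increase along each row and increase up the right column, with no constraint between vertically adjacent cells of the left column, equals the double factorial (2n-1)!! = (2n)!/(2^n n!). -/
private lemma perm2 (e : Equiv.Perm (Fin 2)) :
    (e 0 = 0 ∧ e 1 = 1) ∨ (e 0 = 1 ∧ e 1 = 0) := by
  revert e; decide

private def PhiMap (n : ℕ) :
    ({f : Fin n × Fin 2 ≃ Fin (2*n) //
      (∀ i : Fin n, f (i, 0) < f (i, 1)) ∧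
      (∀ i j : Fin n, i < j → f (i, 1) < f (j, 1))} ×
      (Equiv.Perm (Fin n) × (Fin n → Equiv.Perm (Fin 2)))) →
    (Fin n × Fin 2 ≃ Fin (2*n)) :=
  fun x => (Equiv.prodShear x.2.1 x.2.2).trans x.1.1

private lemma phi_bij (n : ℕ) : Function.Bijective (PhiMap n) := by
  constructor
  · rintro ⟨⟨f, hf1, hf2⟩, τ, σ⟩ ⟨⟨f', hf1', hf2'⟩, τ', σ'⟩ heq
    have hp : ∀ (i : Fin n) (j : Fin 2), f (τ i, σ i j) = f' (τ' i, σ' i j) := by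
      intro i j
      have := congrArg (fun (e : Fin n × Fin 2 ≃ Fin (2*n)) => e (i, j)) heq
      simpa [PhiMap, Equiv.prodShear] using this
    have key : ∀ i : Fin n, f (τ i, 0) = f' (τ' i, 0) ∧ f (τ i, 1) = f' (τ' i, 1) := by
      intro i
      have h0 := hp i 0
      have h1 := hp i 1
      rcases perm2 (σ i) with ⟨ha, hb⟩ | ⟨ha, hb⟩ <;>
        rcases perm2 (σ' i) with ⟨hc, hd⟩ | ⟨hc, hd⟩ <;>
        rw [ha, hc] at h0 <;> rw [hb, hd] at h1
      · exact ⟨h0, h1⟩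
      · exact absurd (h1 ▸ h0 ▸ (hf1 (τ i))) (by have := hf1' (τ' i); omega)
      · exact absurd (h1 ▸ h0 ▸ (hf1' (τ' i))) (by have := hf1 (τ i); omega)
      · exact ⟨h1, h0⟩
    -- the right columns agree
    have hsm : StrictMono (fun k => f (k, 1)) := fun i j h => hf2 i j h
    have hsm' : StrictMono (fun k => f' (k, 1)) := fun i j h => hf2' i j h
    have hrange : Set.range (fun k => f (k, 1)) = Set.range (fun k => f' (k, 1)) := by
      ext x
      constructor
      · rintro ⟨k, rfl⟩
        exact ⟨τ' (τ.symm k), by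
          have := (key (τ.symm k)).2
          simp only [Equiv.apply_symm_apply] at this
          exact this.symm⟩
      · rintro ⟨k, rfl⟩
        exact ⟨τ (τ'.symm k), by
          have := (key (τ'.symm k)).2
          simp only [Equiv.apply_symm_apply] at this
          exact this⟩
    have inst : WellFoundedLT (Fin n) := inferInstance
    have hcol1 : ∀ k, f (k, 1) = f' (k, 1) := fun k =>
      congrFun ((@StrictMono.range_inj (Fin n) (Fin (2*n)) _ _ inst _ _ hsm hsm').mp hrange) k
    have hτ : τ = τ' := by
      ext i
      have h1 : f (τ i, 1) = f (τ' i, 1) := by rw [(key i).2, hcol1]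
      have := f.injective h1
      exact congrArg Fin.val (Prod.ext_iff.mp this).1
    have hcol0 : ∀ k, f (k, 0) = f' (k, 0) := by
      intro k
      have := (key (τ.symm k)).1
      rw [← hτ] at this
      simpa using this
    have hff : f = f' := by
      ext ⟨k, j⟩
      have hj : j = 0 ∨ j = 1 := by omega
      rcases hj with rfl | rfl
      · exact congrArg Fin.val (hcol0 k)
      · exact congrArg Fin.val (hcol1 k)
    have hσ : σ = σ' := by
      funext i
      ext j
      have := hp i j
      rw [hff, hτ] at this
      have := f'.injective this
      exact congrArg Fin.val (Prod.ext_iff.mp this).2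
    subst hff hτ hσ
    rfl
  · intro h
    -- canonical form of h
    set M : Fin n → Fin (2*n) := fun i => max (h (i, 0)) (h (i, 1)) with hM
    have Minj : Function.Injective M := by
      intro i j hij
      rcases max_cases (h (i, 0)) (h (i, 1)) with ⟨e1, _⟩ | ⟨e1, _⟩ <;>
        rcases max_cases (h (j, 0)) (h (j, 1)) with ⟨e2, _⟩ | ⟨e2, _⟩ <;>
        · rw [hM] at hij; simp only [e1, e2] at hij
          exact (Prod.ext_iff.mp (h.injective hij)).1
    set ρ : Equiv.Perm (Fin n) := Tuple.sort M with hρ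
    have hstrict : StrictMono (M ∘ ρ) :=
      (Tuple.monotone_sort M).strictMono_of_injective (Minj.comp ρ.injective)
    set σ : Fin n → Equiv.Perm (Fin 2) :=
      fun i => if h (i, 0) < h (i, 1) then Equiv.refl _ else Equiv.swap 0 1 with hσ
    have hne : ∀ i : Fin n, h (i, 0) ≠ h (i, 1) := by
      intro i he
      have := h.injective he
      simp at this
    have hmax : ∀ i : Fin n, h (i, (σ i).symm 1) = M i := by
      intro i
      rcases lt_or_gt_of_ne (hne i) with hlt | hgt
      · rw [hσ]; simp [hlt, hM, le_of_lt hlt]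
      · rw [hσ]; simp [not_lt_of_gt hgt, hM, le_of_lt hgt, Equiv.swap_apply_right]
    have hmin : ∀ i : Fin n, h (i, (σ i).symm 0) = min (h (i, 0)) (h (i, 1)) := by
      intro i
      rcases lt_or_gt_of_ne (hne i) with hlt | hgt
      · rw [hσ]; simp [hlt, le_of_lt hlt]
      · rw [hσ]; simp [not_lt_of_gt hgt, le_of_lt hgt, Equiv.swap_apply_left]
    refine ⟨⟨⟨(Equiv.prodShear ρ.symm σ).symm.trans h, ?_, ?_⟩, ρ.symm, σ⟩, ?_⟩
    · intro k
      have e0 : (Equiv.prodShear ρ.symm σ).symm.trans h (k, 0)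
          = h (ρ k, (σ (ρ k)).symm 0) := rfl
      have e1 : (Equiv.prodShear ρ.symm σ).symm.trans h (k, 1)
          = h (ρ k, (σ (ρ k)).symm 1) := rfl
      rw [e0, e1, hmin, hmax]
      have := hne (ρ k)
      rcases lt_or_gt_of_ne this with hlt | hgt <;> simp [hM]
    · intro i j hij
      have e1 : ∀ k, (Equiv.prodShear ρ.symm σ).symm.trans h (k, 1)
          = h (ρ k, (σ (ρ k)).symm 1) := fun k => rfl
      rw [e1, e1, hmax, hmax]
      exact hstrict hij
    · show (Equiv.prodShear ρ.symm σ).trans ((Equiv.prodShear ρ.symm σ).symm.trans h) = h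
      rw [← Equiv.trans_assoc, Equiv.self_trans_symm, Equiv.refl_trans]

/-- Fillings of an n×2 grid with 1..2n, rows increasing and the right column
increasing, no constraint in the left column: count is (2n)!/(2^n n!). -/
theorem stmt3 (n : ℕ) :
    Nat.card {f : Fin n × Fin 2 ≃ Fin (2*n) //
      (∀ i : Fin n, f (i, 0) < f (i, 1)) ∧
      (∀ i j : Fin n, i < j → f (i, 1) < f (j, 1))}
    = Nat.factorial (2*n) / (2^n * Nat.factorial n) := by
  have hcard := Nat.card_eq_of_bijective _ (phi_bij n)
  rw [Nat.card_prod, Nat.card_prod] at hcard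
  have e0 : (Fin n × Fin 2) ≃ Fin (2*n) :=
    finProdFinEquiv.trans (finCongr (mul_comm n 2))
  have h1 : Nat.card (Fin n × Fin 2 ≃ Fin (2*n)) = Nat.factorial (2*n) := by
    rw [Nat.card_eq_fintype_card, Fintype.card_equiv e0]
    have : Fintype.card (Fin n × Fin 2) = 2 * n := by
      rw [Fintype.card_prod, Fintype.card_fin, Fintype.card_fin, mul_comm]
    rw [this]
  have h2 : Nat.card (Equiv.Perm (Fin n)) = Nat.factorial n := by
    rw [Nat.card_eq_fintype_card, Fintype.card_perm, Fintype.card_fin]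
  have h3 : Nat.card (Fin n → Equiv.Perm (Fin 2)) = 2^n := by
    rw [Nat.card_eq_fintype_card, Fintype.card_fun]
    norm_num [Fintype.card_perm]
  rw [h1, h2, h3] at hcard
  symm
  apply Nat.div_eq_of_eq_mul_left
  · positivity
  · rw [← hcard]; ring
end

section
/- By the Chung–Feller theorem, for each i with 0 ≤ i ≤ n, the number of lattice paths of length 2n from the origin to (2n,0) with steps (1,1) and (1,-1) having exactly i down steps strictly below the x-axis equals the Catalan number Catalan(n), independently of i. -/
/-!
Cut a balanced path at its first return to the axis. If the first excursion lies above the axis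
it has no down steps below the axis; if it lies below and has semilength `a`, all of its `a + 1`
down steps are below. Writing `f n i` for the number of paths, this gives
`f (n + 1) i = ∑_{a + b = n} C_a (f b i + f b (i - a - 1))`. By induction `f b i = C_b` exactly
for `0 ≤ i ≤ b`, and after swapping `a` and `b` in the second sum exactly one of the two
terms survives in each summand (`i ≤ b` or `i > b`), leaving the Catalan recurrence.
-/

namespace ChungFeller

open Finset

def step (b : Bool) : ℤ := if b then 1 else -1

def height (l : List Bool) : ℤ := (l.map step).sum

/-- Up steps are `true`. `belowCount h l` is the number of down steps of `l` that end below the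
axis when `l` starts at height `h`. -/
def belowCount : ℤ → List Bool → ℕ
  | _, [] => 0
  | h, b :: l => (if b = false ∧ h + step b < 0 then 1 else 0) + belowCount (h + step b) l

def IsDyck (p : List Bool) : Prop := height p = 0 ∧ ∀ r, r <+: p → 0 ≤ height r

@[simp] lemma step_true : step true = 1 := rfl
@[simp] lemma step_false : step false = -1 := rfl

@[simp] lemma height_nil : height [] = 0 := rfl

@[simp] lemma height_cons (b : Bool) (l : List Bool) : height (b :: l) = step b + height l := by
  simp [height]

@[simp] lemma height_append (p q : List Bool) : height (p ++ q) = height p + height q := by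
  simp [height]

@[simp] lemma height_map_not (l : List Bool) : height (l.map not) = -height l := by
  induction l with
  | nil => rfl
  | cons b l ih => cases b <;> simp [ih] <;> ring

lemma height_eq_count_sub_count (l : List Bool) :
    height l = l.count true - l.count false := by
  induction l with
  | nil => rfl
  | cons b l ih => cases b <;> simp [ih] <;> ring

lemma length_eq_two_mul_count_false {l : List Bool} (hl : height l = 0) :
    l.length = 2 * l.count false := by
  have := height_eq_count_sub_count l
  have := List.count_true_add_count_false l
  omega

@[simp] lemma belowCount_nil (h : ℤ) : belowCount h [] = 0 := rfl

lemma belowCount_cons (h : ℤ) (b : Bool) (l : List Bool) :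
    belowCount h (b :: l) =
      (if b = false ∧ h + step b < 0 then 1 else 0) + belowCount (h + step b) l :=
  rfl

lemma belowCount_append (h : ℤ) (p q : List Bool) :
    belowCount h (p ++ q) = belowCount h p + belowCount (h + height p) q := by
  induction p generalizing h with
  | nil => simp
  | cons b p ih => simp [belowCount_cons, ih, add_assoc]

lemma belowCount_eq_zero_of_nonneg {h : ℤ} {l : List Bool}
    (hl : ∀ r, r <+: l → 0 ≤ h + height r) :
    belowCount h l = 0 := by
  induction l generalizing h with
  | nil => rfl
  | cons b l ih =>
    have hb : 0 ≤ h + step b := by simpa using hl [b] (by simp)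
    rw [belowCount_cons, if_neg (by omega), ih fun r hr => by
      simpa [add_assoc] using hl (b :: r) (List.cons_prefix_cons.2 ⟨rfl, hr⟩)]

lemma nonneg_of_belowCount_eq_zero {h : ℤ} {l : List Bool} (h0 : 0 ≤ h)
    (hl : belowCount h l = 0) : ∀ r, r <+: l → 0 ≤ h + height r := by
  induction l generalizing h with
  | nil => simp [h0]
  | cons b l ih =>
    rw [belowCount_cons] at hl
    have hb : 0 ≤ h + step b := by cases b <;> grind [step_false, step_true]
    intro r hr
    obtain rfl | ⟨t, rfl, ht⟩ := List.prefix_cons_iff.1 hr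
    · simpa using h0
    · simpa [add_assoc] using ih hb (by omega) t ht

lemma belowCount_eq_count_false_of_neg {h : ℤ} {l : List Bool}
    (hl : ∀ r, r <+: l → h + height r < 0) : belowCount h l = l.count false := by
  induction l generalizing h with
  | nil => rfl
  | cons b l ih =>
    have hb : h + step b < 0 := by simpa using hl [b] (by simp)
    rw [belowCount_cons, ih fun r hr => by
      simpa [add_assoc] using hl (b :: r) (List.cons_prefix_cons.2 ⟨rfl, hr⟩)]
    cases b <;> grind

lemma isDyck_iff {p : List Bool} : IsDyck p ↔ height p = 0 ∧ belowCount 0 p = 0 :=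
  ⟨fun hp => ⟨hp.1, belowCount_eq_zero_of_nonneg (by simpa using hp.2)⟩,
    fun hp => ⟨hp.1, by simpa using nonneg_of_belowCount_eq_zero le_rfl hp.2⟩⟩

lemma exists_nonneg_append_false {h : ℤ} {m : List Bool} (h0 : 0 ≤ h) (hm : h + height m < 0) :
    ∃ p q, m = p ++ false :: q ∧ h + height p = 0 ∧
      ∀ r, r <+: p → 0 ≤ h + height r := by
  induction m generalizing h with
  | nil => rw [height_nil] at hm; omega
  | cons b m ih =>
    rw [height_cons] at hm
    obtain ⟨rfl, rfl⟩ | hb : (b = false ∧ h = 0) ∨ 0 ≤ h + step b := by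
      cases b <;> grind [step_false, step_true]
    · exact ⟨[], m, rfl, rfl, by simp⟩
    obtain ⟨p, q, rfl, hp, hpr⟩ := ih hb (by omega)
    refine ⟨b :: p, q, rfl, by rw [height_cons]; omega, fun r hr => ?_⟩
    obtain rfl | ⟨t, rfl, ht⟩ := List.prefix_cons_iff.1 hr
    · simpa using h0
    · simpa [add_assoc] using hpr t ht

lemma exists_isDyck_append_false {m : List Bool} (hm : height m < 0) :
    ∃ p q, m = p ++ false :: q ∧ IsDyck p := by
  obtain ⟨p, q, rfl, hp, hpr⟩ := exists_nonneg_append_false le_rfl (by simpa using hm)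
  exact ⟨p, q, rfl, by simpa using hp, by simpa using hpr⟩

lemma IsDyck.length_le_of_append_false_eq {p p' q q' : List Bool} (hp : height p = 0)
    (hp' : IsDyck p') (h : p ++ false :: q = p' ++ false :: q') : p'.length ≤ p.length := by
  by_contra! hlt
  have hpre : p ++ [false] <+: p' :=
    List.prefix_of_prefix_length_le ⟨q, by simpa using h⟩ (List.prefix_append _ _)
      (by simpa using hlt)
  simpa [hp] using hp'.2 _ hpre

lemma IsDyck.append_false_inj {p p' q q' : List Bool} (hp : IsDyck p) (hp' : IsDyck p')
    (h : p ++ false :: q = p' ++ false :: q') : p = p' ∧ q = q' := by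
  have hlen := le_antisymm (hp.length_le_of_append_false_eq hp'.1 h.symm)
    (hp'.length_le_of_append_false_eq hp.1 h)
  simpa using List.append_inj h hlen

lemma belowCount_up_glue {p : List Bool} (hp : IsDyck p) (q : List Bool) :
    belowCount 0 (true :: (p ++ false :: q)) = belowCount 0 q := by
  have hp1 : belowCount 1 p = 0 :=
    belowCount_eq_zero_of_nonneg fun r hr => by linarith [hp.2 r hr]
  simp [belowCount_cons, belowCount_append, hp1, hp.1]

lemma belowCount_down_glue {p : List Bool} (hp : IsDyck p) (q : List Bool) :
    belowCount 0 (false :: (p.map not ++ true :: q)) = 1 + p.length / 2 + belowCount 0 q := by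
  have hp1 : belowCount (-1) (p.map not) = p.length / 2 := by
    rw [belowCount_eq_count_false_of_neg fun r hr => ?_]
    · have := length_eq_two_mul_count_false (l := p.map not) (by simp [hp.1])
      rw [List.length_map] at this
      omega
    obtain ⟨t, ht, rfl⟩ := List.prefix_map_iff.1 hr
    linarith [hp.2 t ht, height_map_not t]
  simp [belowCount_cons, belowCount_append, hp1, hp.1, add_assoc]

/-- `i` is an integer so that `paths b (i - a - 1)` is empty, not a junk set, when `i ≤ a`. -/
def paths (n : ℕ) (i : ℤ) : Set (List Bool) :=
  {l | l.length = 2 * n ∧ height l = 0 ∧ (belowCount 0 l : ℤ) = i}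

instance (n : ℕ) (i : ℤ) : Finite (paths n i) :=
  ((List.finite_length_eq Bool (2 * n)).subset fun _ hl => hl.1).to_subtype

lemma mem_paths_zero {p : List Bool} {a : ℕ} :
    p ∈ paths a 0 ↔ p.length = 2 * a ∧ IsDyck p := by
  simp [paths, isDyck_iff]

lemma up_glue_mem_paths {a b n : ℕ} {i : ℤ} {p q : List Bool} (hab : a + b = n)
    (hp : p ∈ paths a 0) (hq : q ∈ paths b i) :
    true :: (p ++ false :: q) ∈ paths (n + 1) i := by
  rw [mem_paths_zero] at hp
  refine ⟨?_, ?_, ?_⟩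
  · simp only [List.length_cons, List.length_append, hp.1, hq.1]; omega
  · simp [hp.2.1, hq.2.1]
  · rw [belowCount_up_glue hp.2]; exact hq.2.2

lemma down_glue_mem_paths {a b n : ℕ} {i : ℤ} {p q : List Bool} (hab : a + b = n)
    (hp : p ∈ paths a 0) (hq : q ∈ paths b (i - a - 1)) :
    false :: (p.map not ++ true :: q) ∈ paths (n + 1) i := by
  rw [mem_paths_zero] at hp
  refine ⟨?_, ?_, ?_⟩
  · simp only [List.length_cons, List.length_append, List.length_map, hp.1, hq.1]; omega
  · simp [hp.2.1, hq.2.1]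
  · rw [belowCount_down_glue hp.2, hp.1]
    have := hq.2.2
    push_cast
    omega

lemma exists_up_glue_eq {n : ℕ} {i : ℤ} {m : List Bool}
    (hm : true :: m ∈ paths (n + 1) i) :
    ∃ a b p q, a + b = n ∧ p ∈ paths a 0 ∧ q ∈ paths b i ∧ m = p ++ false :: q := by
  obtain ⟨hlen, hh, hbc⟩ := hm
  rw [height_cons, step_true] at hh
  obtain ⟨p, q, rfl, hp⟩ := exists_isDyck_append_false (m := m) (by omega)
  have hq : height q = 0 := by
    rw [height_append, height_cons, hp.1, step_false] at hh; omega
  have hpl := length_eq_two_mul_count_false hp.1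
  have hql := length_eq_two_mul_count_false hq
  refine ⟨p.count false, q.count false, p, q, ?_, mem_paths_zero.2 ⟨hpl, hp⟩,
    ⟨hql, hq, ?_⟩, rfl⟩
  · simp only [List.length_cons, List.length_append] at hlen; omega
  · rwa [← belowCount_up_glue hp]

lemma exists_down_glue_eq {n : ℕ} {i : ℤ} {m : List Bool}
    (hm : false :: m ∈ paths (n + 1) i) :
    ∃ a b p q, a + b = n ∧ p ∈ paths a 0 ∧ q ∈ paths b (i - a - 1) ∧
      m = p.map not ++ true :: q := by
  obtain ⟨hlen, hh, hbc⟩ := hm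
  rw [height_cons, step_false] at hh
  obtain ⟨p, q, hpq, hp⟩ := exists_isDyck_append_false (m := m.map not)
    (by rw [height_map_not]; omega)
  obtain rfl : m = p.map not ++ true :: q.map not := by
    simpa [Function.comp_def] using congrArg (List.map not) hpq
  have hq : height q = 0 := by
    rw [height_append, height_cons, height_map_not, height_map_not, hp.1, step_true] at hh
    omega
  have hpl := length_eq_two_mul_count_false hp.1
  have hql := length_eq_two_mul_count_false hq
  refine ⟨p.count false, q.count false, p, q.map not, ?_, mem_paths_zero.2 ⟨hpl, hp⟩,
    ⟨by simpa using hql, by simpa using hq, ?_⟩, rfl⟩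
  · simp only [List.length_cons, List.length_append, List.length_map] at hlen; omega
  · rw [belowCount_down_glue hp] at hbc
    omega

abbrev Pieces (n : ℕ) (j : ℕ → ℤ) : Type :=
  Σ ab : antidiagonal n, paths ab.1.1 0 × paths ab.1.2 (j ab.1.1)

def upGlue (n : ℕ) (i : ℤ) (x : Pieces n fun _ => i) : paths (n + 1) i :=
  ⟨true :: (x.2.1.1 ++ false :: x.2.2.1),
    up_glue_mem_paths (HasAntidiagonal.mem_antidiagonal.1 x.1.2) x.2.1.2 x.2.2.2⟩

/-- The excursion below the axis is stored as its mirror image, a Dyck path. -/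
def downGlue (n : ℕ) (i : ℤ) (x : Pieces n fun a => i - a - 1) : paths (n + 1) i :=
  ⟨false :: (x.2.1.1.map not ++ true :: x.2.2.1),
    down_glue_mem_paths (HasAntidiagonal.mem_antidiagonal.1 x.1.2) x.2.1.2 x.2.2.2⟩

lemma Pieces.ext {n : ℕ} {j : ℕ → ℤ} {x y : Pieces n j} (hp : x.2.1.1 = y.2.1.1)
    (hq : x.2.2.1 = y.2.2.1) : x = y := by
  obtain ⟨⟨⟨a, b⟩, hab⟩, ⟨p, hp'⟩, ⟨q, hq'⟩⟩ := x
  obtain ⟨⟨⟨a', b'⟩, hab'⟩, ⟨p', hp''⟩, ⟨q', hq''⟩⟩ := y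
  simp only at hp hq
  subst hp hq
  have h1 : p.length = 2 * a := hp'.1
  have h2 : p.length = 2 * a' := hp''.1
  have h3 : q.length = 2 * b := hq'.1
  have h4 : q.length = 2 * b' := hq''.1
  obtain rfl : a = a' := by omega
  obtain rfl : b = b' := by omega
  rfl

lemma upGlue_injective (n : ℕ) (i : ℤ) : Function.Injective (upGlue n i) := by
  intro x y h
  simp only [upGlue, Subtype.mk.injEq, List.cons.injEq, true_and] at h
  obtain ⟨hp, hq⟩ := IsDyck.append_false_inj (mem_paths_zero.1 x.2.1.2).2
    (mem_paths_zero.1 y.2.1.2).2 h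
  exact Pieces.ext hp hq

lemma downGlue_injective (n : ℕ) (i : ℤ) : Function.Injective (downGlue n i) := by
  intro x y h
  simp only [downGlue, Subtype.mk.injEq, List.cons.injEq, true_and] at h
  obtain ⟨hp, hq⟩ := IsDyck.append_false_inj (mem_paths_zero.1 x.2.1.2).2
    (mem_paths_zero.1 y.2.1.2).2 (by simpa [Function.comp_def] using congrArg (List.map not) h)
  exact Pieces.ext hp (List.map_injective_iff.2 (Bool.not_injective) hq)

lemma glue_bijective (n : ℕ) (i : ℤ) :
    Function.Bijective (Sum.elim (upGlue n i) (downGlue n i)) := by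
  refine ⟨(upGlue_injective n i).sumElim (downGlue_injective n i) fun x y h => ?_, ?_⟩
  · simp [upGlue, downGlue] at h
  · rintro ⟨_ | ⟨_ | _, m⟩, hm⟩
    · simp [paths] at hm
    · obtain ⟨a, b, p, q, hab, hp, hq, rfl⟩ := exists_down_glue_eq hm
      exact ⟨.inr ⟨⟨(a, b), HasAntidiagonal.mem_antidiagonal.2 hab⟩, ⟨p, hp⟩, ⟨q, hq⟩⟩,
        rfl⟩
    · obtain ⟨a, b, p, q, hab, hp, hq, rfl⟩ := exists_up_glue_eq hm
      exact ⟨.inl ⟨⟨(a, b), HasAntidiagonal.mem_antidiagonal.2 hab⟩, ⟨p, hp⟩, ⟨q, hq⟩⟩,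
        rfl⟩

lemma card_paths_succ (n : ℕ) (i : ℤ) : Nat.card (paths (n + 1) i) =
    ∑ ab ∈ antidiagonal n, Nat.card (paths ab.1 0) *
      (Nat.card (paths ab.2 i) + Nat.card (paths ab.2 (i - ab.1 - 1))) := by
  rw [← Nat.card_eq_of_bijective _ (glue_bijective n i), Nat.card_sum, Nat.card_sigma,
    Nat.card_sigma]
  simp only [Nat.card_prod, mul_add, sum_add_distrib]
  rw [sum_coe_sort (antidiagonal n) fun ab => Nat.card (paths ab.1 0) * Nat.card (paths ab.2 i),
    sum_coe_sort (antidiagonal n)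
      fun ab => Nat.card (paths ab.1 0) * Nat.card (paths ab.2 (i - ab.1 - 1))]

lemma card_paths_zero (i : ℤ) : Nat.card (paths 0 i) = if i = 0 then 1 else 0 := by
  have : paths 0 i = {l | l = [] ∧ i = 0} := by
    ext l
    constructor
    · rintro ⟨hl, -, hi⟩
      obtain rfl := List.length_eq_zero_iff.1 hl
      exact ⟨rfl, hi.symm⟩
    · rintro ⟨rfl, rfl⟩
      exact ⟨rfl, rfl, rfl⟩
  split_ifs with hi
  · subst hi
    simp [this]
  · simp [this, hi]

lemma card_paths (n : ℕ) (i : ℤ) :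
    Nat.card (paths n i) = if 0 ≤ i ∧ i ≤ n then catalan n else 0 := by
  induction n using Nat.strong_induction_on generalizing i with
  | _ n ih =>
  rcases n with _ | n
  · rw [card_paths_zero, catalan_zero]
    simp [le_antisymm_iff, and_comm]
  rw [card_paths_succ, catalan_succ']
  simp only [mul_add, sum_add_distrib]
  rw [← Nat.sum_antidiagonal_swap (f := fun ab =>
    Nat.card (paths ab.1 0) * Nat.card (paths ab.2 (i - ab.1 - 1))), ← sum_add_distrib]
  calc _ = ∑ ab ∈ antidiagonal n,
        if 0 ≤ i ∧ i ≤ ↑(n + 1) then catalan ab.1 * catalan ab.2 else 0 :=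
      sum_congr rfl fun ab hab => ?_
    _ = _ := by rw [sum_ite_irrel, sum_const_zero]
  rw [HasAntidiagonal.mem_antidiagonal] at hab
  simp only [Prod.fst_swap, Prod.snd_swap]
  rw [ih ab.1 (by omega), ih ab.2 (by omega), ih ab.2 (by omega), ih ab.1 (by omega)]
  split_ifs <;> first | omega | ring

lemma height_ofFn {N : ℕ} (s : Fin N → Bool) : height (List.ofFn s) = ∑ m, step (s m) := by
  rw [height, List.map_ofFn, List.sum_ofFn, Function.comp_def]

lemma sum_filter_le_succ {M : Type*} [AddCommMonoid M] {N : ℕ} (f : Fin (N + 1) → M)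
    (j : Fin N) :
    ∑ m ∈ univ.filter (· ≤ j.succ), f m = f 0 + ∑ m ∈ univ.filter (· ≤ j), f m.succ := by
  simp [sum_filter, Fin.sum_univ_succ, Fin.succ_le_succ_iff]

lemma belowCount_ofFn (h : ℤ) {N : ℕ} (s : Fin N → Bool) :
    belowCount h (List.ofFn s) =
      (univ.filter fun j =>
        s j = false ∧ h + ∑ m ∈ univ.filter (· ≤ j), step (s m) < 0).card := by
  induction N generalizing h with
  | zero => rfl
  | succ N ih =>
    rw [List.ofFn_succ, belowCount_cons, ih, card_filter, card_filter, Fin.sum_univ_succ]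
    simp only [sum_filter_le_succ, add_assoc]
    congr 2
    simp [sum_filter]

lemma card_ofFn_mem {α : Type*} {N : ℕ} {S : Set (List α)} (hS : ∀ l ∈ S, l.length = N) :
    Nat.card {s : Fin N → α // List.ofFn s ∈ S} = Nat.card S := by
  refine Nat.card_eq_of_bijective (fun s => ⟨List.ofFn s.1, s.2⟩)
    ⟨fun s t h => ?_, fun l => ?_⟩
  · exact Subtype.ext (List.ofFn_injective (congrArg Subtype.val h))
  · obtain ⟨l, hl⟩ := l
    obtain rfl := hS l hl
    exact ⟨⟨l.get, by simpa using hl⟩, by simp⟩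

lemma ofFn_mem_paths_iff {n i : ℕ} (s : Fin (2 * n) → Bool) :
    List.ofFn s ∈ paths n i ↔ (∑ m, step (s m)) = 0 ∧
      (univ.filter fun j =>
        s j = false ∧ ∑ m ∈ univ.filter (· ≤ j), step (s m) < 0).card = i := by
  simp [paths, height_ofFn, belowCount_ofFn]

end ChungFeller

/-- Chung–Feller: the number of ±1 paths of length 2n ending at 0 with exactly i
down steps strictly below the x-axis equals Catalan(n), independently of i ≤ n. -/
theorem stmt7 (n i : ℕ) (hi : i ≤ n) :
    Nat.card {s : Fin (2*n) → Bool //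
      (∑ m, (if s m then (1:ℤ) else -1)) = 0 ∧
      (Finset.univ.filter (fun j : Fin (2*n) =>
        s j = false ∧
        (∑ m ∈ Finset.univ.filter (fun m : Fin (2*n) => m ≤ j),
          (if s m then (1:ℤ) else -1)) < 0)).card = i}
    = catalan n := by
  open ChungFeller in
  calc _ = Nat.card {s : Fin (2 * n) → Bool // List.ofFn s ∈ paths n i} :=
        Nat.card_congr (Equiv.subtypeEquivRight fun s => (ofFn_mem_paths_iff s).symm)
    _ = Nat.card (paths n i) := card_ofFn_mem fun _ hl => hl.1
    _ = catalan n := by rw [card_paths, if_pos (by omega)]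
end

section
/- The number of n×2 Young tableaux with k horizontal walls in the first column at heights 0 < h_1 < ... < h_k < n equals (1/(2n+1))·∏_{i=1}^{k+1} C(2h_i + 1, h_i - h_{i-1}), where h_0 = 0 and h_{k+1} = n. -/
/-!
Let `T(n, x)` count walled tableaux with `n` rows whose top left entry is `< x`. The top right
entry of a tableau with `n + 1` rows is its maximum `2n + 1`; if its top left entry is `y`, deleting
the top row and relabelling the other entries through `Fin.succAbove y` leaves a walled tableau
with `n` rows whose top left entry is `< y`, unless a wall sits between the two top left cells.
Hence `T(n + 1, x) = ∑_{y < min x (2n+1)} T(n, y)` without a wall and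
`T(n + 1, x) = min x (2n+1) · T(n, 2n)` at a wall. Inside a block of `l` rows starting at height
`h` this is a chain count with the reflection-principle closed form
`C(x, l) - C(x, 2h + l + 1)`, and its saturated value times `2(h + l) + 1` is the ballot number
`(2h + 1) · C(2(h + l) + 1, l)`. Multiplying over the blocks, the factors `2h_i + 1` telescope.
-/

open Finset Function

section Labeling

variable {α : Type*} {K : ℕ}

def IncreasingAlong (r : α → α → Prop) (f : α → Fin K) : Prop :=
  ∀ ⦃p q⦄, r p q → f p < f q

lemma IncreasingAlong.apply_eq_last {r : α → α → Prop} {f : α ≃ Fin (K + 1)}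
    (hf : IncreasingAlong r f) {t : α} (ht : ∀ a, a ≠ t → ∃ b, r a b) : f t = Fin.last K := by
  by_contra hne
  obtain ⟨b, hb⟩ := ht (f.symm (Fin.last K)) fun h => hne (by rw [← h, f.apply_symm_apply])
  simpa using (hf hb).trans_le (Fin.le_last _)

lemma increasingAlong_comp_iff {β : Type*} {r : α → α → Prop} (σ : β ≃ α) (f : α → Fin K) :
    IncreasingAlong (r on σ) (f ∘ σ) ↔ IncreasingAlong r f :=
  ⟨fun h p q hpq => by simpa using @h (σ.symm p) (σ.symm q) (by simpa [onFun] using hpq),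
    fun h _ _ hpq => h hpq⟩

def labelingOptionEquiv (x : Fin (K + 1)) :
    {g : Option α ≃ Fin (K + 1) // g none = x} ≃ (α ≃ Fin K) :=
  (Equiv.optionSubtype x).trans (Equiv.equivCongr (Equiv.refl α) (finSuccAboveEquiv x).symm)

@[simp]
lemma labelingOptionEquiv_symm_apply_some (x : Fin (K + 1)) (e : α ≃ Fin K) (a : α) :
    ((labelingOptionEquiv x).symm e : Option α ≃ Fin (K + 1)) (some a) = x.succAbove (e a) :=
  rfl

@[simp]
lemma labelingOptionEquiv_symm_apply_none (x : Fin (K + 1)) (e : α ≃ Fin K) :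
    ((labelingOptionEquiv x).symm e : Option α ≃ Fin (K + 1)) none = x :=
  rfl

lemma increasingAlong_labelingOptionEquiv_symm_iff {R : Option α → Option α → Prop}
    (hR : ∀ v, ¬ R none v) (x : Fin (K + 1)) (e : α ≃ Fin K) :
    IncreasingAlong R ((labelingOptionEquiv x).symm e : Option α ≃ Fin (K + 1)) ↔
      IncreasingAlong (R on some) e ∧ ∀ a, R (some a) none → (e a : ℕ) < x := by
  constructor
  · intro h
    refine ⟨fun a b hab => ?_, fun a ha => ?_⟩
    · have := h hab
      rwa [labelingOptionEquiv_symm_apply_some, labelingOptionEquiv_symm_apply_some,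
        Fin.succAbove_lt_succAbove_iff] at this
    · have := h ha
      rwa [labelingOptionEquiv_symm_apply_some, labelingOptionEquiv_symm_apply_none,
        Fin.succAbove_lt_iff_castSucc_lt] at this
  · rintro ⟨h, hnone⟩ (_ | a) (_ | b) hab
    · exact (hR _ hab).elim
    · exact (hR _ hab).elim
    · rw [labelingOptionEquiv_symm_apply_some, labelingOptionEquiv_symm_apply_none,
        Fin.succAbove_lt_iff_castSucc_lt]
      exact hnone a hab
    · rw [labelingOptionEquiv_symm_apply_some, labelingOptionEquiv_symm_apply_some,
        Fin.succAbove_lt_succAbove_iff]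
      exact h hab

lemma card_increasingAlong_option {R : Option α → Option α → Prop} (hR : ∀ v, ¬ R none v)
    (x : Fin (K + 1)) (P : (α → Fin (K + 1)) → Prop) :
    Nat.card {g : Option α ≃ Fin (K + 1) // IncreasingAlong R g ∧ g none = x ∧ P (g ∘ some)} =
      Nat.card {e : α ≃ Fin K // IncreasingAlong (R on some) e ∧
        (∀ a, R (some a) none → (e a : ℕ) < x) ∧ P (x.succAbove ∘ e)} := by
  refine Nat.card_congr <| (Equiv.subtypeEquivRight fun g => ?_).trans <|
    (Equiv.subtypeSubtypeEquivSubtypeInter (fun g : Option α ≃ Fin (K + 1) => g none = x)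
      (fun g => IncreasingAlong R g ∧ P (g ∘ some))).symm.trans <|
      (labelingOptionEquiv x).subtypeEquiv fun g => ?_
  · exact ⟨fun ⟨h1, h2, h3⟩ => ⟨h2, h1, h3⟩, fun ⟨h2, h1, h3⟩ => ⟨h1, h2, h3⟩⟩
  · obtain ⟨g, rfl⟩ := (labelingOptionEquiv x).symm.surjective g
    rw [Equiv.apply_symm_apply, increasingAlong_labelingOptionEquiv_symm_iff hR, and_assoc]
    rfl

end Labeling

lemma Nat.card_subtype_and_lt_eq_sum {β : Type*} [Finite β] (P : β → Prop) (φ : β → ℕ) (x : ℕ) :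
    Nat.card {b // P b ∧ φ b < x} = ∑ y ∈ range x, Nat.card {b // P b ∧ φ b = y} := by
  classical
  have := Fintype.ofFinite β
  simp only [Nat.card_eq_fintype_card, Fintype.card_subtype]
  rw [card_eq_sum_card_fiberwise (f := φ) (t := range x) (fun b hb => by simp_all)]
  refine sum_congr rfl fun y hy => congrArg card ?_
  ext b
  simp only [mem_filter, mem_univ, true_and, mem_range] at hy ⊢
  constructor
  · rintro ⟨⟨hP, -⟩, rfl⟩; exact ⟨hP, rfl⟩
  · rintro ⟨hP, rfl⟩; exact ⟨⟨hP, hy⟩, rfl⟩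

/-- `chainCount b l x` counts the chains `z₀ < ⋯ < z_{l-1} < x` with `z_t ≤ b + 2t`. -/
def chainCount (b : ℕ) : ℕ → ℕ → ℕ
  | 0, _ => 1
  | l + 1, x => ∑ y ∈ range (min x (b + 2 * l + 1)), chainCount b l y

lemma sum_range_choose_eq_choose_succ (m l : ℕ) : ∑ y ∈ range m, y.choose l = m.choose (l + 1) := by
  induction m with
  | zero => simp
  | succ m ih => rw [sum_range_succ, ih, Nat.choose_succ_succ', add_comm]

lemma chainCount_eq_choose_sub_choose {b l x : ℕ} (hx : x ≤ b + 2 * l) :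
    (chainCount b l x : ℤ) = x.choose l - x.choose (b + l + 1) := by
  induction l generalizing x with
  | zero => simp [chainCount, Nat.choose_eq_zero_of_lt (by omega : x < b + 0 + 1)]
  | succ l ih =>
    have hsum (m : ℕ) (hm : m ≤ b + 2 * l + 1) :
        ∑ y ∈ range m, (chainCount b l y : ℤ) = m.choose (l + 1) - m.choose (b + l + 2) := by
      rw [sum_congr rfl fun y hy => ih (by simp at hy; omega), sum_sub_distrib, ← Nat.cast_sum,
        ← Nat.cast_sum, sum_range_choose_eq_choose_succ, sum_range_choose_eq_choose_succ]
    rw [chainCount, Nat.cast_sum]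
    rcases Nat.lt_or_ge x (b + 2 * l + 2) with hx' | hx'
    · rw [min_eq_left (by omega), hsum x (by omega)]
      ring_nf
    · obtain rfl : x = b + 2 * l + 2 := by omega
      have hsymm : (b + 2 * l + 1).choose l = (b + 2 * l + 1).choose (b + l + 1) :=
        Nat.choose_symm_of_eq_add (by ring)
      have hpascal : (b + 2 * l + 2).choose (b + (l + 1) + 1) =
          (b + 2 * l + 1).choose (b + l + 1) + (b + 2 * l + 1).choose (b + l + 2) :=
        Nat.choose_succ_succ' _ _
      rw [min_eq_right (by omega), hsum _ le_rfl, Nat.choose_succ_succ' (b + 2 * l + 1) l,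
        hpascal, hsymm]
      push_cast
      ring

lemma two_mul_add_one_mul_chainCount (g d : ℕ) :
    (2 * (g + d) + 1) * chainCount (2 * g) d (2 * (g + d)) =
      (2 * g + 1) * (2 * (g + d) + 1).choose d := by
  rcases d with _ | e
  · simp [chainCount]
  set N := 2 * (g + (e + 1))
  have hcount := chainCount_eq_choose_sub_choose (b := 2 * g) (l := e + 1) (x := N) (by omega)
  rw [Nat.choose_symm_of_eq_add (show N = 2 * g + (e + 1) + 1 + e by omega)] at hcount
  have hlow := Nat.add_one_mul_choose_eq N e
  have hhigh := Nat.choose_mul_succ_eq N (e + 1)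
  rw [show N + 1 - (e + 1) = 2 * g + e + 2 by omega] at hhigh
  zify at hlow hhigh ⊢
  rw [hcount]
  linear_combination hhigh - hlow

section Tableau

variable (W : ℕ → Prop)

def WallCovBy {n : ℕ} (p q : Fin n × Fin 2) : Prop :=
  ((p.1 : ℕ) = q.1 ∧ p.2 = 0 ∧ q.2 = 1) ∨
  ((p.1 : ℕ) + 1 = q.1 ∧ p.2 = 1 ∧ q.2 = 1) ∨
  ((p.1 : ℕ) + 1 = q.1 ∧ p.2 = 0 ∧ q.2 = 0 ∧ ¬ W q.1)

def topRowCell {n : ℕ} : Option (Option (Fin n × Fin 2)) → Fin (n + 1) × Fin 2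
  | none => (Fin.last n, 1)
  | some none => (Fin.last n, 0)
  | some (some p) => (p.1.castSucc, p.2)

lemma topRowCell_injective (n : ℕ) : Injective (topRowCell (n := n)) := by
  rintro (_ | _ | ⟨⟨i, hi⟩, c⟩) (_ | _ | ⟨⟨j, hj⟩, d⟩) h <;>
    simp only [topRowCell, Prod.mk.injEq, Fin.ext_iff, Fin.val_last, Fin.val_castSucc] at h <;>
    simp_all <;> omega

noncomputable def topRowEquiv (n : ℕ) : Option (Option (Fin n × Fin 2)) ≃ Fin (n + 1) × Fin 2 :=
  Equiv.ofBijective topRowCell <| (Fintype.bijective_iff_injective_and_card _).2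
    ⟨topRowCell_injective n, by simp; ring⟩

lemma exists_wallCovBy_of_ne_top {n : ℕ} (p : Fin (n + 1) × Fin 2) (hp : p ≠ (Fin.last n, 1)) :
    ∃ q, WallCovBy W p q := by
  obtain ⟨i, c⟩ := p
  fin_cases c
  · exact ⟨(i, 1), Or.inl ⟨rfl, rfl, rfl⟩⟩
  · have hi : (i : ℕ) + 1 < n + 1 := by
      have : i ≠ Fin.last n := fun h => hp (by simp [h])
      have := Fin.val_lt_last this
      omega
    exact ⟨(⟨i + 1, hi⟩, 1), Or.inr (Or.inl ⟨rfl, rfl, rfl⟩)⟩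

lemma not_wallCovBy_topRowEquiv_none {n : ℕ} (v : Option (Option (Fin n × Fin 2))) :
    ¬ WallCovBy W (topRowEquiv n none) (topRowEquiv n v) := by
  rcases v with _ | _ | ⟨⟨i, hi⟩, c⟩ <;> simp [topRowEquiv, topRowCell, WallCovBy]
  omega

lemma not_wallCovBy_topRowEquiv_some_none {n : ℕ} (v : Option (Fin n × Fin 2)) :
    ¬ WallCovBy W (topRowEquiv n (some none)) (topRowEquiv n (some v)) := by
  rcases v with _ | ⟨⟨i, hi⟩, c⟩ <;> simp [topRowEquiv, topRowCell, WallCovBy]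
  omega

lemma wallCovBy_topRowEquiv_top_left_iff {n : ℕ} (p : Fin n × Fin 2) :
    WallCovBy W (topRowEquiv n (some (some p))) (topRowEquiv n (some none)) ↔
      (p.1 : ℕ) + 1 = n ∧ p.2 = 0 ∧ ¬ W n := by
  simp [topRowEquiv, topRowCell, WallCovBy]

/-- Walled tableaux with `n` rows whose top left entry is `< x` (no condition when `n = 0`). -/
noncomputable def tableauCount (n x : ℕ) : ℕ :=
  Nat.card {f : Fin n × Fin 2 ≃ Fin (2 * n) //
    IncreasingAlong (WallCovBy W) f ∧ ∀ i : Fin n, (i : ℕ) + 1 = n → (f (i, 0) : ℕ) < x}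

lemma tableauCount_zero (x : ℕ) : tableauCount W 0 x = 1 := by
  refine Nat.card_eq_one_iff_unique.2 ⟨⟨fun f g => Subtype.ext <| Equiv.ext fun p => p.1.elim0⟩,
    ⟨⟨Equiv.equivOfIsEmpty _ (Fin 0), fun p => p.1.elim0, fun i => i.elim0⟩⟩⟩

lemma card_increasingAlong_topLeft_eq {n y : ℕ} (hy : y ≤ 2 * n) :
    Nat.card {f : Fin (n + 1) × Fin 2 ≃ Fin (2 * (n + 1)) //
      IncreasingAlong (WallCovBy W) f ∧ (f (Fin.last n, 0) : ℕ) = y} =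
    Nat.card {e : Fin n × Fin 2 ≃ Fin (2 * n) // IncreasingAlong (WallCovBy W) e ∧
      ∀ i : Fin n, (i : ℕ) + 1 = n → ¬ W n → (e (i, 0) : ℕ) < y} := by
  set τ := topRowEquiv n
  set R := WallCovBy W on τ
  calc _ = Nat.card {g : Option (Option (Fin n × Fin 2)) ≃ Fin (2 * n + 1 + 1) //
        IncreasingAlong R g ∧ g none = Fin.last _ ∧ (g (some none) : ℕ) = y} := by
          refine Nat.card_congr <| (τ.symm.equivCongr (Equiv.refl _)).subtypeEquiv fun f => ?_
          change _ ↔ IncreasingAlong R (f ∘ τ) ∧ f (Fin.last n, 1) = Fin.last _ ∧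
            (f (Fin.last n, 0) : ℕ) = y
          rw [increasingAlong_comp_iff]
          exact ⟨fun ⟨hf, hy⟩ => ⟨hf, hf.apply_eq_last (exists_wallCovBy_of_ne_top W), hy⟩,
            fun ⟨hf, _, hy⟩ => ⟨hf, hy⟩⟩
    _ = Nat.card {e : Option (Fin n × Fin 2) ≃ Fin (2 * n + 1) //
        IncreasingAlong (R on some) e ∧ e none = ⟨y, by omega⟩ ∧ (fun _ => True) (e ∘ some)} := by
          refine (card_increasingAlong_option (R := R) (not_wallCovBy_topRowEquiv_none W)
            (Fin.last _) fun g' => (g' none : ℕ) = y).trans ?_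
          refine Nat.card_congr <| Equiv.subtypeEquivRight fun e => ?_
          simp [Fin.ext_iff, Fin.is_le]
    _ = _ := by
          refine (card_increasingAlong_option (R := R on some)
            (not_wallCovBy_topRowEquiv_some_none W) _ fun _ => True).trans ?_
          refine Nat.card_congr <| Equiv.subtypeEquivRight fun e => ?_
          simp only [and_true]
          -- `castSucc` preserves values, so `R` restricted to the lower rows is `WallCovBy W`
          refine and_congr Iff.rfl ⟨fun h i hi hW => h (i, 0) ?_, ?_⟩
          · exact (wallCovBy_topRowEquiv_top_left_iff W _).2 ⟨hi, rfl, hW⟩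
          · rintro h ⟨i, c⟩ hic
            obtain ⟨hi, rfl, hW⟩ := (wallCovBy_topRowEquiv_top_left_iff W _).1 hic
            exact h i hi hW

lemma tableauCount_succ (n x : ℕ) :
    tableauCount W (n + 1) x = ∑ y ∈ range (min x (2 * n + 1)),
      Nat.card {e : Fin n × Fin 2 ≃ Fin (2 * n) // IncreasingAlong (WallCovBy W) e ∧
        ∀ i : Fin n, (i : ℕ) + 1 = n → ¬ W n → (e (i, 0) : ℕ) < y} := by
  have htop (f : Fin (n + 1) × Fin 2 ≃ Fin (2 * (n + 1))) (hf : IncreasingAlong (WallCovBy W) f) :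
      (f (Fin.last n, 0) : ℕ) < 2 * n + 1 := by
    have := hf (p := (Fin.last n, 0)) (q := (Fin.last n, 1)) (Or.inl ⟨rfl, rfl, rfl⟩)
    have := (f (Fin.last n, 1)).isLt
    rw [Fin.lt_def] at *
    omega
  calc tableauCount W (n + 1) x
      = Nat.card {f : Fin (n + 1) × Fin 2 ≃ Fin (2 * (n + 1)) //
          IncreasingAlong (WallCovBy W) f ∧ (f (Fin.last n, 0) : ℕ) < min x (2 * n + 1)} := by
        refine Nat.card_congr <| Equiv.subtypeEquivRight fun f => and_congr_right fun hf => ?_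
        refine ⟨fun h => lt_min (h _ (by simp)) (htop f hf), fun h i hi => ?_⟩
        obtain rfl : i = Fin.last n := Fin.ext (by simp; omega)
        exact (lt_min_iff.1 h).1
    _ = _ := Nat.card_subtype_and_lt_eq_sum _ _ _
    _ = _ := sum_congr rfl fun y hy => card_increasingAlong_topLeft_eq W (by simp at hy; omega)

lemma tableauCount_succ_of_not_wall {n : ℕ} (hW : ¬ W n) (x : ℕ) :
    tableauCount W (n + 1) x = ∑ y ∈ range (min x (2 * n + 1)), tableauCount W n y := by
  rw [tableauCount_succ]
  exact sum_congr rfl fun y _ => Nat.card_congr <| Equiv.subtypeEquivRight fun e => by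
    simp only [hW, not_false_eq_true, forall_const]

lemma tableauCount_succ_of_wall {n : ℕ} (hW : W n ∨ n = 0) (x : ℕ) :
    tableauCount W (n + 1) x = min x (2 * n + 1) * tableauCount W n (2 * n) := by
  rw [tableauCount_succ, sum_congr rfl (g := fun _ => tableauCount W n (2 * n)), sum_const,
    card_range, smul_eq_mul]
  refine fun y _ => Nat.card_congr <| Equiv.subtypeEquivRight fun e =>
    and_congr_right fun _ => ⟨fun _ i _ => (e (i, 0)).isLt, fun _ i hi hW' => ?_⟩
  rcases hW with hW | rfl
  · exact absurd hW hW'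
  · omega

lemma tableauCount_add_succ {h : ℕ} (hstart : W h ∨ h = 0) {l : ℕ}
    (hfree : ∀ j, h < j → j ≤ h + l → ¬ W j) (x : ℕ) :
    tableauCount W (h + l + 1) x = tableauCount W h (2 * h) * chainCount (2 * h) (l + 1) x := by
  induction l generalizing x with
  | zero => simp [tableauCount_succ_of_wall W hstart, chainCount, mul_comm]
  | succ l ih =>
    have hW : ¬ W (h + l + 1) := hfree _ (by omega) (by omega)
    rw [← add_assoc, tableauCount_succ_of_not_wall W hW,
      sum_congr rfl fun y _ => ih (fun j hj hj' => hfree j hj (by omega)) y, ← mul_sum, chainCount,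
      show 2 * (h + l + 1) + 1 = 2 * h + 2 * (l + 1) + 1 by ring]

lemma card_tableau_eq_tableauCount (n : ℕ) :
    Nat.card {f : Fin n × Fin 2 ≃ Fin (2 * n) //
      (∀ i : Fin n, f (i, 0) < f (i, 1)) ∧
      (∀ i j : Fin n, (i : ℕ) + 1 = (j : ℕ) → f (i, 1) < f (j, 1)) ∧
      (∀ i j : Fin n, (i : ℕ) + 1 = (j : ℕ) → ¬ W j → f (i, 0) < f (j, 0))} =
    tableauCount W n (2 * n) := by
  refine Nat.card_congr <| Equiv.subtypeEquivRight fun f => ?_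
  refine ⟨fun ⟨hrow, hright, hleft⟩ => ⟨?_, fun i _ => (f (i, 0)).isLt⟩,
    fun ⟨hf, _⟩ => ⟨fun i => hf (Or.inl ⟨rfl, rfl, rfl⟩),
      fun i j hij => hf (Or.inr (Or.inl ⟨hij, rfl, rfl⟩)),
      fun i j hij hW => hf (Or.inr (Or.inr ⟨hij, rfl, rfl, hW⟩))⟩⟩
  rintro ⟨i, c⟩ ⟨j, d⟩ (⟨hij, rfl, rfl⟩ | ⟨hij, rfl, rfl⟩ | ⟨hij, rfl, rfl, hW⟩)
  · obtain rfl := Fin.ext hij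
    exact hrow i
  · exact hright i j hij
  · exact hleft i j hij hW

end Tableau

lemma two_mul_add_one_mul_tableauCount {k : ℕ} {h : ℕ → ℕ} (hmono : ∀ i ≤ k, h i < h (i + 1))
    (h0 : h 0 = 0) {a : ℕ} (ha : a ≤ k + 1) :
    (2 * h a + 1) * tableauCount (fun j => ∃ b, 1 ≤ b ∧ b ≤ k ∧ h b = j) (h a) (2 * h a) =
      ∏ i ∈ range a, (2 * h (i + 1) + 1).choose (h (i + 1) - h i) := by
  have hsm : StrictMonoOn h (Set.Iic (k + 1)) :=
    strictMonoOn_Iic_of_lt_succ fun m hm => by simpa using hmono m (by omega)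
  induction a with
  | zero => simp [h0, tableauCount_zero]
  | succ a ih =>
    obtain ⟨l, hl⟩ : ∃ l, h (a + 1) = h a + l + 1 := ⟨h (a + 1) - h a - 1, by
      have := hmono a (by omega); omega⟩
    have hstart : (∃ b, 1 ≤ b ∧ b ≤ k ∧ h b = h a) ∨ h a = 0 := by
      rcases Nat.eq_zero_or_pos a with rfl | hpos
      · exact Or.inr h0
      · exact Or.inl ⟨a, hpos, by omega, rfl⟩
    have hfree : ∀ j, h a < j → j ≤ h a + l → ¬ ∃ b, 1 ≤ b ∧ b ≤ k ∧ h b = j := by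
      rintro j hj hj' ⟨b, -, hbk, rfl⟩
      have h1 : a < b := (hsm.lt_iff_lt (by simp; omega) (by simp; omega)).1 hj
      have h2 : b < a + 1 := (hsm.lt_iff_lt (by simp; omega) (by simp; omega)).1 (by omega)
      omega
    rw [prod_range_succ, ← ih (by omega), hl, tableauCount_add_succ _ hstart hfree,
      show h a + l + 1 - h a = l + 1 by omega]
    have := two_mul_add_one_mul_chainCount (h a) (l + 1)
    rw [show h a + (l + 1) = h a + l + 1 by ring] at this
    set T := tableauCount (fun j => ∃ b, 1 ≤ b ∧ b ≤ k ∧ h b = j) (h a) (2 * h a)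
    calc _ = T * ((2 * (h a + l + 1) + 1) * chainCount (2 * h a) (l + 1) (2 * (h a + l + 1))) := by
          ring
      _ = _ := by rw [this]; ring

/-- The number of n×2 Young tableaux with k horizontal walls in the first column at
heights 0 < h 1 < … < h k < n (with h 0 = 0 and h (k+1) = n) equals
(1/(2n+1))·∏_{i=1}^{k+1} C(2 h_i + 1, h_i − h_{i−1}). -/
theorem stmt11 (n k : ℕ) (h : ℕ → ℕ)
    (hmono : ∀ i ≤ k, h i < h (i+1)) (h0 : h 0 = 0) (hend : h (k+1) = n) :
    (Nat.card {f : Fin n × Fin 2 ≃ Fin (2*n) //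
      (∀ i : Fin n, f (i, 0) < f (i, 1)) ∧
      (∀ i j : Fin n, (i : ℕ) + 1 = (j : ℕ) → f (i, 1) < f (j, 1)) ∧
      (∀ i j : Fin n, (i : ℕ) + 1 = (j : ℕ) →
        (¬ ∃ a, 1 ≤ a ∧ a ≤ k ∧ h a = (j : ℕ)) → f (i, 0) < f (j, 0))} : ℚ)
    = (1 / (2*n + 1)) *
      ∏ i ∈ Finset.range (k+1), ((2 * h (i+1) + 1).choose (h (i+1) - h i) : ℚ) := by
  have hprod := two_mul_add_one_mul_tableauCount hmono h0 (le_refl (k + 1))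
  rw [hend] at hprod
  rw [card_tableau_eq_tableauCount (fun j => ∃ a, 1 ≤ a ∧ a ≤ k ∧ h a = j), ← Nat.cast_prod,
    ← hprod]
  push_cast
  field_simp
end

section
/- If polynomials p_n satisfy p_{n+1}(z) = ∫_0^z Q(x,z) p_n(x) dx for a fixed bivariate polynomial Q of degree d in z, with p_0 = 1, then the generating function G(t,z) = ∑_{n≥0} p_n(z) t^n satisfies a linear differential equation in z with coefficients polynomial in z and t, i.e., G is D-finite in z. -/
/-!
Write `Q(x, z) = ∑_{k ≤ N} q_k(x) z^k`. The recurrence reads `p_{n+1} = ∑_k z^k ∫₀^z q_k p_n`;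
differentiating `N + 1` times in `z` kills every `z^k`, and Leibniz' rule turns the integrals back
into derivatives of `q_k p_n`. Hence `∂^{N+1} p_{n+1} = ∑_{m ≤ N} c_m ∂^m p_n` for polynomials
`c_m` independent of `n`, and together with `∂^{N+1} p_0 = 0` this is, coefficientwise in `t`,
the equation `∂^{N+1} G = t ∑_m c_m ∂^m G`.
-/

open Polynomial

section DiffOps

variable (R : Type*) [CommSemiring R]

noncomputable def polyDiffOps (s : ℕ) : Submodule R[X] (R[X] → R[X]) :=
  Submodule.span R[X] ((fun m => (⇑(derivative : R[X] →ₗ[R] R[X]))^[m]) '' ↑(Finset.range s))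

variable {R}

theorem polyDiffOps_mono {s t : ℕ} (h : s ≤ t) : polyDiffOps R s ≤ polyDiffOps R t :=
  Submodule.span_mono <| Set.image_mono <| by simpa using h

theorem mem_polyDiffOps_iff {s : ℕ} {L : R[X] → R[X]} :
    L ∈ polyDiffOps R s ↔
      ∃ c : ℕ → R[X], ∀ f, L f = ∑ m ∈ Finset.range s, c m * derivative^[m] f := by
  rw [polyDiffOps, Submodule.mem_span_image_finset_iff_exists_fun']
  refine exists_congr fun c => ⟨fun h f => ?_, fun h => funext fun f => ?_⟩
  · simp [← h, Finset.sum_apply]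
  · simp [h, Finset.sum_apply]

theorem iterate_derivative_mul_mem_polyDiffOps (a : R[X]) (i : ℕ) :
    (fun f => derivative^[i] (a * f)) ∈ polyDiffOps R (i + 1) :=
  mem_polyDiffOps_iff.2 ⟨fun k => i.choose k • derivative^[i - k] a, fun f => by
    simp [iterate_derivative_mul, mul_assoc]⟩

end DiffOps

section Antiderivative

variable {K : Type*} [Field K]

noncomputable def antideriv (g : K[X]) : K[X] :=
  g.sum fun i a => C (a / (i + 1)) * X ^ (i + 1)

theorem derivative_antideriv [CharZero K] (g : K[X]) : derivative (antideriv g) = g := by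
  conv_rhs => rw [← g.sum_C_mul_X_pow_eq]
  simp only [antideriv, Polynomial.sum, map_sum, derivative_C_mul_X_pow]
  refine Finset.sum_congr rfl fun i _ => ?_
  rw [Nat.cast_add_one, add_tsub_cancel_right, div_mul_cancel₀ _ (Nat.cast_add_one_ne_zero i)]

theorem antideriv_eval_zero (g : K[X]) : (antideriv g).eval 0 = 0 := by
  simp [antideriv, Polynomial.sum, eval_finsetSum]

theorem iterate_derivative_succ_antideriv [CharZero K] (g : K[X]) (i : ℕ) :
    derivative^[i + 1] (antideriv g) = derivative^[i] g := by
  rw [Function.iterate_succ_apply, derivative_antideriv]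

theorem iterate_derivative_mul_antideriv_mem_polyDiffOps [CharZero K] {u : K[X]} {s : ℕ}
    (hu : derivative^[s + 1] u = 0) (a : K[X]) :
    (fun f => derivative^[s + 1] (u * antideriv (a * f))) ∈ polyDiffOps K (s + 1) := by
  have hLeibniz : (fun f => derivative^[s + 1] (u * antideriv (a * f))) =
      ∑ i ∈ Finset.range (s + 1), ((s + 1).choose (i + 1) • derivative^[s - i] u) •
        fun f => derivative^[i] (a * f) := by
    funext f
    simp [iterate_derivative_mul, Finset.sum_range_succ' _ (s + 1), hu,
      iterate_derivative_succ_antideriv, Finset.sum_apply, mul_assoc]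
  rw [hLeibniz]
  exact Submodule.sum_mem _ fun i hi => Submodule.smul_mem _ _ <|
    polyDiffOps_mono (by simpa using hi) (iterate_derivative_mul_mem_polyDiffOps a i)

end Antiderivative

theorem integral_eval_eq_eval_antideriv (g : ℝ[X]) (z : ℝ) :
    ∫ x in (0 : ℝ)..z, g.eval x = (antideriv g).eval z := by
  rw [intervalIntegral.integral_eq_sub_of_hasDerivAt (f := fun x => (antideriv g).eval x)
    (fun x _ => by simpa [derivative_antideriv] using (antideriv g).hasDerivAt x)
    (g.continuous.intervalIntegrable _ _), antideriv_eval_zero, sub_zero]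

theorem eval_equivMvPolynomial {R : Type*} [CommSemiring R] (P : R[X][X]) (x y : R) :
    MvPolynomial.eval ![x, y] (Bivariate.equivMvPolynomial R P) = P.evalEval x y := by
  have hcomp : (MvPolynomial.eval ![x, y]).comp (Bivariate.equivMvPolynomial R).toRingHom =
      evalEvalRingHom x y := by
    ext <;> simp
  exact RingHom.congr_fun hcomp P

theorem evalEval_eq_sum_range {R : Type*} [CommSemiring R] (P : R[X][X]) (x y : R) :
    P.evalEval x y = ∑ k ∈ Finset.range (P.natDegree + 1), (P.coeff k).eval x * y ^ k := by
  simp [evalEval, eval_eq_sum_range (p := P), eval_finsetSum]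

theorem eq_sum_X_pow_mul_antideriv {P : ℝ[X][X]} {f g : ℝ[X]}
    (h : ∀ z, g.eval z = ∫ x in (0 : ℝ)..z, P.evalEval x z * f.eval x) :
    g = ∑ k ∈ Finset.range (P.natDegree + 1), X ^ k * antideriv (P.coeff k * f) := by
  refine Polynomial.funext fun z => ?_
  have hexpand : ∀ x, P.evalEval x z * f.eval x =
      ∑ k ∈ Finset.range (P.natDegree + 1), z ^ k * (P.coeff k * f).eval x := fun x => by
    rw [evalEval_eq_sum_range, Finset.sum_mul]
    exact Finset.sum_congr rfl fun k _ => by rw [eval_mul]; ring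
  simp_rw [h, hexpand]
  rw [intervalIntegral.integral_finsetSum (f := fun k x => z ^ k * (P.coeff k * f).eval x)
    fun k _ => (continuous_const.mul (P.coeff k * f).continuous).intervalIntegrable _ _,
    eval_finsetSum]
  refine Finset.sum_congr rfl fun k _ => ?_
  rw [intervalIntegral.integral_const_mul, integral_eval_eq_eval_antideriv, eval_mul, eval_pow,
    eval_X]

section PowerSeries

variable {R : Type*} [CommRing R]

noncomputable def coeffwiseDerivative (G : PowerSeries R[X]) : PowerSeries R[X] :=
  PowerSeries.mk fun i => derivative (PowerSeries.coeff i G)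

theorem iterate_coeffwiseDerivative_mk (h : ℕ → R[X]) (j : ℕ) :
    coeffwiseDerivative^[j] (PowerSeries.mk h) =
      PowerSeries.mk fun i => derivative^[j] (h i) := by
  induction j generalizing h with
  | zero => rfl
  | succ j ih =>
    simp only [Function.iterate_succ_apply, coeffwiseDerivative, PowerSeries.coeff_mk, ih]

theorem exists_ode_of_iterate_derivative_succ [Nontrivial R] {p : ℕ → R[X]} {s : ℕ}
    {c : ℕ → R[X]} (h0 : derivative^[s] (p 0) = 0)
    (hrec : ∀ n, derivative^[s] (p (n + 1)) = ∑ m ∈ Finset.range s, c m * derivative^[m] (p n)) :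
    ∃ (r : ℕ) (a : ℕ → R[X][X]), (∃ j ≤ r, a j ≠ 0) ∧
      ∑ j ∈ Finset.range (r + 1), (PowerSeries.mk fun i => (a j).coeff i) *
        coeffwiseDerivative^[j] (PowerSeries.mk fun i => p i) = 0 := by
  refine ⟨s, fun j => if j < s then -(C (c j) * X) else 1, ⟨s, le_rfl, by simp⟩, ?_⟩
  have hcoe (a : R[X][X]) : (PowerSeries.mk fun i => a.coeff i) = (a : PowerSeries R[X]) :=
    PowerSeries.ext fun i => by simp [Polynomial.coeff_coe]
  have hshift : (PowerSeries.mk fun i => derivative^[s] (p i)) = PowerSeries.X *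
      ∑ j ∈ Finset.range s, PowerSeries.C (c j) * PowerSeries.mk fun i => derivative^[j] (p i) := by
    ext (_ | n)
    · simp [h0]
    · simp [PowerSeries.coeff_succ_X_mul, hrec]
  simp only [hcoe, iterate_coeffwiseDerivative_mk, Finset.sum_range_succ, lt_irrefl, if_false,
    coe_one, one_mul, hshift, Finset.mul_sum, ← Finset.sum_add_distrib]
  refine Finset.sum_eq_zero fun j hj => ?_
  simp only [Finset.mem_range.1 hj, if_true, coe_neg, coe_mul, coe_C, coe_X]
  ring

end PowerSeries

theorem exists_iterate_derivative_sum_X_pow_mul_antideriv {K : Type*} [Field K] [CharZero K]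
    (a : ℕ → K[X]) (s : ℕ) :
    ∃ c : ℕ → K[X], ∀ f,
      derivative^[s + 1] (∑ k ∈ Finset.range (s + 1), X ^ k * antideriv (a k * f)) =
        ∑ m ∈ Finset.range (s + 1), c m * derivative^[m] f := by
  refine mem_polyDiffOps_iff.1 ?_
  have hsum :
      (fun f => derivative^[s + 1] (∑ k ∈ Finset.range (s + 1), X ^ k * antideriv (a k * f))) =
        ∑ k ∈ Finset.range (s + 1), fun f => derivative^[s + 1] (X ^ k * antideriv (a k * f)) := by
    funext f
    simp [iterate_derivative_sum, Finset.sum_apply]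
  rw [hsum]
  refine Submodule.sum_mem _ fun k hk => iterate_derivative_mul_antideriv_mem_polyDiffOps ?_ (a k)
  exact iterate_derivative_eq_zero <| (natDegree_X_pow_le k).trans_lt (Finset.mem_range.1 hk)

theorem stmt16_general (Q : MvPolynomial (Fin 2) ℝ)
    (p : ℕ → Polynomial ℝ) (hp0 : p 0 = 1)
    (hrec : ∀ (n : ℕ) (z : ℝ), (p (n+1)).eval z =
      ∫ x in (0:ℝ)..z, (MvPolynomial.eval ![x, z] Q) * (p n).eval x) :
    ∃ (r : ℕ) (a : ℕ → Polynomial (Polynomial ℝ)),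
      (∃ j ≤ r, a j ≠ 0) ∧
      ∑ j ∈ Finset.range (r+1),
        (PowerSeries.mk fun i => (a j).coeff i) *
          (fun (G : PowerSeries (Polynomial ℝ)) =>
            PowerSeries.mk fun i => Polynomial.derivative (PowerSeries.coeff i G))^[j]
          (PowerSeries.mk fun i => p i) = 0 := by
  set P := (Bivariate.equivMvPolynomial ℝ).symm Q
  have hQ (x z : ℝ) : MvPolynomial.eval ![x, z] Q = P.evalEval x z := by
    rw [← eval_equivMvPolynomial, AlgEquiv.apply_symm_apply]
  have hstep (n : ℕ) :
      p (n + 1) = ∑ k ∈ Finset.range (P.natDegree + 1), X ^ k * antideriv (P.coeff k * p n) :=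
    eq_sum_X_pow_mul_antideriv fun z => by simp only [hrec, hQ]
  obtain ⟨c, hc⟩ := exists_iterate_derivative_sum_X_pow_mul_antideriv P.coeff P.natDegree
  exact exists_ode_of_iterate_derivative_succ (c := c)
    (by rw [hp0, iterate_derivative_one P.natDegree.succ_pos]) fun n => by rw [hstep, hc]

/-- If p₀ = 1 and p_{n+1}(z) = ∫₀^z Q(x,z) pₙ(x) dx for a fixed bivariate
polynomial Q of degree d in z, then G(t,z) = ∑ pₙ(z) tⁿ is D-finite in z:
there are polynomials a_j(t,z), not all zero, with ∑ a_j ∂_z^j G = 0. -/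
theorem stmt16 (Q : MvPolynomial (Fin 2) ℝ) (d : ℕ)
    (hd : MvPolynomial.degreeOf 1 Q = d)
    (p : ℕ → Polynomial ℝ) (hp0 : p 0 = 1)
    (hrec : ∀ (n : ℕ) (z : ℝ), (p (n+1)).eval z =
      ∫ x in (0:ℝ)..z, (MvPolynomial.eval ![x, z] Q) * (p n).eval x) :
    ∃ (r : ℕ) (a : ℕ → Polynomial (Polynomial ℝ)),
      (∃ j ≤ r, a j ≠ 0) ∧
      ∑ j ∈ Finset.range (r+1),
        (PowerSeries.mk fun i => (a j).coeff i) *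
          (fun (G : PowerSeries (Polynomial ℝ)) =>
            PowerSeries.mk fun i => Polynomial.derivative (PowerSeries.coeff i G))^[j]
          (PowerSeries.mk fun i => p i) = 0 :=
  stmt16_general Q p hp0 hrec
end
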